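/- arXiv:2105.08289 — 2 statements merged into one kernel-verified Lean document; each statement's English description precedes it below -/
import Mathlib

section
/- Let α ∈ [1,2] and s > 0. For all ξ ∈ R^2 with ξ ≠ 0, ∫_{(1/2)|ξ| ≤ |η| ≤ 2|ξ|} e^{-s|ξ−η|^α}/(|ξ|^2|ξ−η|) dη ≤ C |ξ|^{−3/2} s^{−1/(2α)}. -/
open MeasureTheory Real Set Metric

local notation "E" => EuclideanSpace ℝ (Fin 2)

lemma exp_neg_le_rpow {β x : ℝ} (hβ : 0 < β) (hβ1 : β ≤ 1) (hx : 0 < x) :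
    Real.exp (-x) ≤ x ^ (-β) := by
  rcases le_total x 1 with hx1 | hx1
  · calc Real.exp (-x) ≤ 1 := by
          rw [Real.exp_le_one_iff]; linarith
      _ ≤ x ^ (-β) :=
          Real.one_le_rpow_of_pos_of_le_one_of_nonpos hx hx1 (by linarith)
  · calc Real.exp (-x) = (Real.exp x)⁻¹ := Real.exp_neg x
      _ ≤ x⁻¹ := by
          apply inv_anti₀ hx
          linarith [Real.add_one_le_exp x]
      _ = x ^ (-1 : ℝ) := by rw [Real.rpow_neg_one]
      _ ≤ x ^ (-β) := Real.rpow_le_rpow_of_exponent_le hx1 (by linarith)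

lemma lintegral_indicator_rpow_le {R : ℝ} (hR : 0 < R) :
    ∫⁻ x : E, ENNReal.ofReal
        ((closedBall (0:E) R).indicator (fun x : E => ‖x‖ ^ (-(3:ℝ)/2)) x) ≤
      volume (ball (0:E) 1) * ENNReal.ofReal (4 * R ^ ((1:ℝ)/2)) := by
  set B := volume (ball (0:E) 1) with hB
  set f : E → ℝ := (closedBall (0:E) R).indicator (fun x : E => ‖x‖ ^ (-(3:ℝ)/2)) with hf
  have f_nn : ∀ x, 0 ≤ f x := by
    intro x
    apply Set.indicator_nonneg
    intro y _
    exact Real.rpow_nonneg (norm_nonneg y) _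
  have f_meas : Measurable f := by
    apply Measurable.indicator _ measurableSet_closedBall
    exact measurable_norm.pow_const _
  rw [lintegral_eq_lintegral_meas_le volume (Filter.Eventually.of_forall f_nn)
    f_meas.aemeasurable]
  set T : ℝ := R ^ (-(3:ℝ)/2) with hT
  have hTpos : 0 < T := Real.rpow_pos_of_pos hR _
  -- pointwise measure bound
  have key : ∀ t ∈ Ioi (0:ℝ), volume {a : E | t ≤ f a} ≤
      B * ENNReal.ofReal (min R (t ^ (-(2:ℝ)/3)) ^ 2) := by
    intro t ht
    have ht : (0:ℝ) < t := ht
    have hmin : 0 ≤ min R (t ^ (-(2:ℝ)/3)) :=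
      le_min hR.le (Real.rpow_nonneg ht.le _)
    have hsub : {a : E | t ≤ f a} ⊆ closedBall (0:E) (min R (t ^ (-(2:ℝ)/3))) := by
      intro a ha
      have ha : t ≤ f a := ha
      have haR : a ∈ closedBall (0:E) R := by
        by_contra h
        rw [hf, Set.indicator_of_notMem h] at ha
        linarith
      have hfa : f a = ‖a‖ ^ (-(3:ℝ)/2) := Set.indicator_of_mem haR _
      have hna : 0 < ‖a‖ := by
        rcases eq_or_lt_of_le (norm_nonneg a) with h | h
        · exfalso
          rw [hfa, ← h, Real.zero_rpow (by norm_num)] at ha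
          linarith
        · exact h
      rw [mem_closedBall_zero_iff]
      refine le_min (mem_closedBall_zero_iff.mp haR) ?_
      have := Real.rpow_le_rpow_of_nonpos ht (hfa ▸ ha) (by norm_num : (-(2:ℝ)/3) ≤ 0)
      calc ‖a‖ = (‖a‖ ^ (-(3:ℝ)/2)) ^ (-(2:ℝ)/3) := by
            rw [← Real.rpow_mul (norm_nonneg a)]; norm_num
        _ ≤ t ^ (-(2:ℝ)/3) := this
    calc volume {a : E | t ≤ f a} ≤ volume (closedBall (0:E) (min R (t ^ (-(2:ℝ)/3)))) :=
          measure_mono hsub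
      _ = ENNReal.ofReal (min R (t ^ (-(2:ℝ)/3)) ^ Module.finrank ℝ E) * B :=
          Measure.addHaar_closedBall _ _ hmin
      _ = B * ENNReal.ofReal (min R (t ^ (-(2:ℝ)/3)) ^ 2) := by
          rw [mul_comm, finrank_euclideanSpace_fin]
  calc ∫⁻ t in Ioi (0:ℝ), volume {a : E | t ≤ f a}
      ≤ ∫⁻ t in Ioi (0:ℝ), B * ENNReal.ofReal (min R (t ^ (-(2:ℝ)/3)) ^ 2) :=
        setLIntegral_mono' measurableSet_Ioi key
    _ = ∫⁻ t in Ioc 0 T ∪ Ioi T, B * ENNReal.ofReal (min R (t ^ (-(2:ℝ)/3)) ^ 2) := by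
        rw [Ioc_union_Ioi_eq_Ioi hTpos.le]
    _ ≤ (∫⁻ t in Ioc 0 T, B * ENNReal.ofReal (min R (t ^ (-(2:ℝ)/3)) ^ 2)) +
        ∫⁻ t in Ioi T, B * ENNReal.ofReal (min R (t ^ (-(2:ℝ)/3)) ^ 2) :=
        lintegral_union_le _ _ _
    _ ≤ B * ENNReal.ofReal (R ^ ((1:ℝ)/2)) + B * ENNReal.ofReal (3 * R ^ ((1:ℝ)/2)) := by
        gcongr
        · -- Ioc part
          calc ∫⁻ t in Ioc 0 T, B * ENNReal.ofReal (min R (t ^ (-(2:ℝ)/3)) ^ 2)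
              ≤ ∫⁻ _t in Ioc 0 T, B * ENNReal.ofReal (R ^ 2) := by
                apply setLIntegral_mono' measurableSet_Ioc
                intro t ht
                have hmin : 0 ≤ min R (t ^ (-(2:ℝ)/3)) :=
                  le_min hR.le (Real.rpow_nonneg ht.1.le _)
                refine mul_le_mul_right (ENNReal.ofReal_le_ofReal ?_) B
                exact pow_le_pow_left₀ hmin (min_le_left _ _) 2
            _ = B * ENNReal.ofReal (R ^ 2) * ENNReal.ofReal T := by
                rw [setLIntegral_const, Real.volume_Ioc, sub_zero]
            _ = B * ENNReal.ofReal (R ^ ((1:ℝ)/2)) := by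
                rw [mul_assoc, ← ENNReal.ofReal_mul (by positivity)]
                congr 2
                rw [hT, ← Real.rpow_natCast R 2, ← Real.rpow_add hR]
                norm_num
        · -- Ioi part
          calc ∫⁻ t in Ioi T, B * ENNReal.ofReal (min R (t ^ (-(2:ℝ)/3)) ^ 2)
              ≤ ∫⁻ t in Ioi T, B * ENNReal.ofReal (t ^ (-(4:ℝ)/3)) := by
                apply setLIntegral_mono' measurableSet_Ioi
                intro t ht
                have ht' : (0:ℝ) < t := hTpos.trans ht
                refine mul_le_mul_right (ENNReal.ofReal_le_ofReal ?_) B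
                calc min R (t ^ (-(2:ℝ)/3)) ^ 2 ≤ (t ^ (-(2:ℝ)/3)) ^ 2 :=
                      pow_le_pow_left₀ (le_min hR.le (Real.rpow_nonneg ht'.le _))
                        (min_le_right _ _) 2
                  _ = t ^ (-(4:ℝ)/3) := by
                      rw [← Real.rpow_two, ← Real.rpow_mul ht'.le]; norm_num
            _ = B * ∫⁻ t in Ioi T, ENNReal.ofReal (t ^ (-(4:ℝ)/3)) :=
                lintegral_const_mul' _ _ measure_ball_lt_top.ne
            _ = B * ENNReal.ofReal (3 * R ^ ((1:ℝ)/2)) := by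
                congr 1
                rw [← ofReal_integral_eq_lintegral_ofReal]
                · congr 1
                  rw [integral_Ioi_rpow_of_lt (by norm_num) hTpos]
                  rw [hT, ← Real.rpow_mul hR.le]
                  norm_num
                  ring
                · exact (integrableOn_Ioi_rpow_iff hTpos).mpr (by norm_num)
                · filter_upwards [ae_restrict_mem measurableSet_Ioi] with t ht
                  exact Real.rpow_nonneg (hTpos.trans ht).le _
    _ = B * ENNReal.ofReal (4 * R ^ ((1:ℝ)/2)) := by
        rw [← mul_add, ← ENNReal.ofReal_add (by positivity) (by positivity)]
        ring_nf

/-- the middle-frequency integral bound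
`∫_{|ξ|/2 ≤ |η| ≤ 2|ξ|} e^{-s|ξ−η|^α}/(|ξ|²|ξ−η|) dη ≤ C |ξ|^{−3/2} s^{−1/(2α)}`. -/
theorem middle_frequency_bound :
    ∃ C > 0, ∀ α : ℝ, 1 ≤ α → α ≤ 2 → ∀ s : ℝ, 0 < s →
      ∀ ξ : EuclideanSpace ℝ (Fin 2), ξ ≠ 0 →
        (∫ η in {η : EuclideanSpace ℝ (Fin 2) |
            ‖ξ‖ / 2 ≤ ‖η‖ ∧ ‖η‖ ≤ 2 * ‖ξ‖},
          Real.exp (-s * ‖ξ - η‖ ^ α) / (‖ξ‖ ^ 2 * ‖ξ - η‖)) ≤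
        C * ‖ξ‖ ^ (-(3 : ℝ) / 2) * s ^ (-1 / (2 * α)) := by
  set K : ℝ := (volume (ball (0:E) 1)).toReal with hK
  have hKpos : 0 < K :=
    ENNReal.toReal_pos (measure_ball_pos volume (0:E) one_pos).ne' measure_ball_lt_top.ne
  refine ⟨4 * Real.sqrt 3 * K, by positivity, ?_⟩
  intro α hα1 hα2 s hs ξ hξ0
  have hξ : (0:ℝ) < ‖ξ‖ := norm_pos_iff.mpr hξ0
  set A : Set E := {η : E | ‖ξ‖ / 2 ≤ ‖η‖ ∧ ‖η‖ ≤ 2 * ‖ξ‖} with hA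
  set R : ℝ := 3 * ‖ξ‖ with hR
  have hRpos : 0 < R := by positivity
  set f : E → ℝ := fun η => Real.exp (-s * ‖ξ - η‖ ^ α) / (‖ξ‖ ^ 2 * ‖ξ - η‖) with hf
  set ind : E → ℝ := (closedBall (0:E) R).indicator (fun x : E => ‖x‖ ^ (-(3:ℝ)/2)) with hind
  have hind_meas : Measurable ind :=
    Measurable.indicator (measurable_norm.pow_const _) measurableSet_closedBall
  set c : ENNReal := ENNReal.ofReal (s ^ (-1/(2*α)) / ‖ξ‖ ^ 2) with hc
  have hα0 : (0:ℝ) < α := by linarith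
  have f_nn : ∀ η, 0 ≤ f η := fun η =>
    div_nonneg (Real.exp_pos _).le (by positivity)
  have f_meas : Measurable f := by
    apply Measurable.div
    · exact (((measurable_const.sub measurable_id).norm.pow_const α).const_mul (-s)).exp
    · exact ((measurable_const.sub measurable_id).norm).const_mul _
  have hAmeas : MeasurableSet A := by
    have : A = (fun η : E => ‖η‖) ⁻¹' (Icc (‖ξ‖/2) (2*‖ξ‖)) := rfl
    rw [this]
    exact measurable_norm measurableSet_Icc
  -- pointwise bound
  have key : ∀ η ∈ A, ENNReal.ofReal (f η) ≤ c * ENNReal.ofReal (ind (ξ - η)) := by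
    intro η hη
    have hmem : ξ - η ∈ closedBall (0:E) R := by
      rw [mem_closedBall_zero_iff]
      calc ‖ξ - η‖ ≤ ‖ξ‖ + ‖η‖ := norm_sub_le _ _
        _ ≤ ‖ξ‖ + 2 * ‖ξ‖ := by linarith [hη.2]
        _ = R := by rw [hR]; ring
    rw [show ind (ξ - η) = ‖ξ - η‖ ^ (-(3:ℝ)/2) from Set.indicator_of_mem hmem _]
    rcases eq_or_lt_of_le (norm_nonneg (ξ - η)) with hr | hr
    · have : f η = 0 := by rw [hf]; simp [← hr]
      rw [this, ENNReal.ofReal_zero]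
      exact zero_le
    · set r : ℝ := ‖ξ - η‖ with hrdef
      have hmain : f η ≤ s ^ (-1/(2*α)) / ‖ξ‖ ^ 2 * r ^ (-(3:ℝ)/2) := by
        have hβ1 : (0:ℝ) < 1/(2*α) := by positivity
        have hβ2 : 1/(2*α) ≤ 1 := by
          rw [div_le_one (by positivity)]; linarith
        have hexp : Real.exp (-s * r ^ α) ≤ s ^ (-1/(2*α)) * r ^ (-(1:ℝ)/2) := by
          have hαne : α ≠ 0 := hα0.ne'
          have h1 : Real.exp (-s * r ^ α) ≤ (s * r ^ α) ^ (-(1/(2*α))) := by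
            rw [neg_mul]
            exact exp_neg_le_rpow hβ1 hβ2 (by positivity)
          calc Real.exp (-s * r ^ α) ≤ (s * r ^ α) ^ (-(1/(2*α))) := h1
            _ = s ^ (-(1/(2*α))) * (r ^ α) ^ (-(1/(2*α))) :=
                Real.mul_rpow hs.le (Real.rpow_nonneg hr.le _)
            _ = s ^ (-1/(2*α)) * r ^ (-(1:ℝ)/2) := by
                rw [← Real.rpow_mul hr.le,
                  show α * -(1/(2*α)) = -(1:ℝ)/2 by field_simp,
                  show -(1/(2*α)) = -1/(2*α) by ring]
        have heq : s ^ (-1/(2*α)) / ‖ξ‖ ^ 2 * r ^ (-(3:ℝ)/2) =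
            (s ^ (-1/(2*α)) * r ^ (-(1:ℝ)/2)) / (‖ξ‖ ^ 2 * r) := by
          rw [show (-(3:ℝ)/2) = (-(1:ℝ)/2) + (-1) by norm_num, Real.rpow_add hr,
            Real.rpow_neg_one]
          field_simp
        rw [heq, hf]
        exact div_le_div_of_nonneg_right hexp (by positivity)
      calc ENNReal.ofReal (f η) ≤
          ENNReal.ofReal (s ^ (-1/(2*α)) / ‖ξ‖ ^ 2 * r ^ (-(3:ℝ)/2)) :=
            ENNReal.ofReal_le_ofReal hmain
        _ = c * ENNReal.ofReal (r ^ (-(3:ℝ)/2)) := by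
            rw [hc, ← ENNReal.ofReal_mul (by positivity)]
  -- assemble
  have h1 : ∫ η in A, f η = (∫⁻ η in A, ENNReal.ofReal (f η)).toReal :=
    integral_eq_lintegral_of_nonneg_ae (Filter.Eventually.of_forall f_nn)
      f_meas.aestronglyMeasurable
  rw [show (∫ η in A, Real.exp (-s * ‖ξ - η‖ ^ α) / (‖ξ‖ ^ 2 * ‖ξ - η‖)) = ∫ η in A, f η
      from rfl, h1]
  have h2 : (∫⁻ η in A, ENNReal.ofReal (f η)) ≤
      c * (volume (ball (0:E) 1) * ENNReal.ofReal (4 * R ^ ((1:ℝ)/2))) := by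
    calc (∫⁻ η in A, ENNReal.ofReal (f η))
        ≤ ∫⁻ η in A, c * ENNReal.ofReal (ind (ξ - η)) := setLIntegral_mono' hAmeas key
      _ ≤ ∫⁻ η, c * ENNReal.ofReal (ind (ξ - η)) := setLIntegral_le_lintegral _ _
      _ = c * ∫⁻ η, ENNReal.ofReal (ind (ξ - η)) :=
          lintegral_const_mul' _ _ ENNReal.ofReal_ne_top
      _ = c * ∫⁻ x, ENNReal.ofReal (ind x) := by
          congr 1
          exact (Measure.measurePreserving_sub_left volume ξ).lintegral_comp
            hind_meas.ennreal_ofReal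
      _ ≤ c * (volume (ball (0:E) 1) * ENNReal.ofReal (4 * R ^ ((1:ℝ)/2))) := by
          gcongr
          exact lintegral_indicator_rpow_le hRpos
  refine le_trans (ENNReal.toReal_mono ?_ h2) ?_
  · exact ENNReal.mul_ne_top ENNReal.ofReal_ne_top
      (ENNReal.mul_ne_top measure_ball_lt_top.ne ENNReal.ofReal_ne_top)
  · have hvol : volume (ball (0:E) 1) = ENNReal.ofReal K :=
      (ENNReal.ofReal_toReal measure_ball_lt_top.ne).symm
    rw [hc, hvol, ← ENNReal.ofReal_mul (by positivity), ← ENNReal.ofReal_mul (by positivity),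
      ENNReal.toReal_ofReal (by positivity)]
    apply le_of_eq
    have hX : ‖ξ‖ ^ ((1:ℝ)/2) = ‖ξ‖ ^ (-(3:ℝ)/2) * ‖ξ‖ ^ 2 := by
      rw [← Real.rpow_natCast ‖ξ‖ 2, ← Real.rpow_add hξ]
      norm_num
    rw [hR, Real.mul_rpow (by norm_num) hξ.le, Real.sqrt_eq_rpow, hX]
    field_simp
end

section
/- Let α ∈ [1,2], c > 0, and t ≥ 2. For ξ ∈ R^2 with 0 < |ξ| ≤ (1/4), the double integral ∫_1^t ∫_{2|ξ|}^1 e^{-c s ρ^α} dρ ds satisfies, after substituting ρ → ρ s^{-1/α}: ∫_1^t s^{-1/α} ∫_{2|ξ| s^{1/α}}^{s^{1/α}} e^{-cρ} dρ ds ≥ C ∫_1^{min(t, (4|ξ|)^{-α})} s^{-1/α} ds, and hence for |ξ| ≤ ε t^{-1/α} with ε ≤ 1/4, it is bounded below by C t^{1 - 1/α} when α ∈ (1,2] and by C ln t when α = 1. -/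
/-!
On the range `ρ ≤ s ^ (-1/α)` the exponent `c s ρ ^ α` is at most `c`, so the inner integral
over `[2|ξ|, 1]` is at least `e^{-c} (s ^ (-1/α) - 2|ξ|)`. When `|ξ| ≤ t ^ (-1/α) / 4` this is
`≥ e^{-c} s ^ (-1/α) / 2` for every `s ∈ [1, t]`, and integrating in `s` leaves
`∫_1^t s ^ (-1/α) ds`, which is `≥ t ^ (1 - 1/α) / 2` (keep only `[t/2, t]`) and `= log t` for `α = 1`.
-/

open MeasureTheory Real Set

theorem mul_rpow_le_one_of_le_rpow_neg_one_div {α s ρ : ℝ} (hα : 0 < α) (hs : 0 < s)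
    (hρ : 0 ≤ ρ) (hρs : ρ ≤ s ^ (-1 / α)) : s * ρ ^ α ≤ 1 := by
  have hpow : (s ^ (-1 / α)) ^ α = s⁻¹ := by
    rw [← rpow_mul hs.le, div_mul_cancel₀ _ hα.ne', rpow_neg_one]
  calc s * ρ ^ α ≤ s * (s ^ (-1 / α)) ^ α := by gcongr
    _ = 1 := by rw [hpow, mul_inv_cancel₀ hs.ne']

section ExpNegMulRpow

variable {α c : ℝ}

theorem continuous_exp_neg_mul_rpow (hα : 0 ≤ α) (s : ℝ) :
    Continuous fun ρ : ℝ => exp (-c * s * ρ ^ α) :=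
  (continuous_const.mul (continuous_rpow_const hα)).rexp

theorem antitone_setIntegral_exp_neg_mul_rpow (hα : 0 ≤ α) (hc : 0 ≤ c) {a : ℝ} (ha : 0 ≤ a)
    (b : ℝ) : Antitone fun s : ℝ => ∫ ρ in Icc a b, exp (-c * s * ρ ^ α) := by
  intro s s' hss'
  refine setIntegral_mono_on (continuous_exp_neg_mul_rpow hα s').integrableOn_Icc
    (continuous_exp_neg_mul_rpow hα s).integrableOn_Icc measurableSet_Icc fun ρ hρ => ?_
  have hρα : 0 ≤ ρ ^ α := rpow_nonneg (ha.trans hρ.1) α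
  rw [exp_le_exp]
  nlinarith [mul_nonneg (mul_nonneg hc hρα) (sub_nonneg.2 hss')]

theorem exp_neg_mul_rpow_le_setIntegral (hα : 0 < α) (hc : 0 ≤ c) {s a b : ℝ} (hs : 0 < s)
    (ha : 0 ≤ a) (has : a ≤ s ^ (-1 / α) / 2) (hsb : s ^ (-1 / α) ≤ b) :
    exp (-c) / 2 * s ^ (-1 / α) ≤ ∫ ρ in Icc a b, exp (-c * s * ρ ^ α) := by
  set r := s ^ (-1 / α) with hr
  have hr0 : 0 < r := rpow_pos_of_pos hs _
  have hsub : Icc a r ⊆ Icc a b := Icc_subset_Icc_right hsb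
  have hint : IntegrableOn (fun ρ => exp (-c * s * ρ ^ α)) (Icc a b) :=
    (continuous_exp_neg_mul_rpow hα.le s).integrableOn_Icc
  have hlow : ∀ ρ ∈ Icc a r, exp (-c) ≤ exp (-c * s * ρ ^ α) := fun ρ hρ => by
    have := mul_rpow_le_one_of_le_rpow_neg_one_div hα hs (ha.trans hρ.1) hρ.2
    rw [exp_le_exp]
    nlinarith
  calc exp (-c) / 2 * r ≤ exp (-c) * volume.real (Icc a r) := by
        rw [volume_real_Icc_of_le (by linarith)]
        nlinarith [exp_pos (-c)]
    _ ≤ ∫ ρ in Icc a r, exp (-c * s * ρ ^ α) :=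
        setIntegral_ge_of_const_le_real measurableSet_Icc measure_Icc_lt_top.ne hlow
          (hint.mono_set hsub)
    _ ≤ ∫ ρ in Icc a b, exp (-c * s * ρ ^ α) :=
        setIntegral_mono_set hint (ae_of_all _ fun _ => (exp_pos _).le) hsub.eventuallyLE

theorem setIntegral_rpow_neg_one_div_le_setIntegral_exp_neg_mul_rpow (hα : 0 < α) (hc : 0 ≤ c)
    {a t : ℝ} (ha : 0 ≤ a) (hat : a ≤ t ^ (-1 / α) / 2) :
    exp (-c) / 2 * ∫ s in Icc 1 t, s ^ (-1 / α) ≤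
      ∫ s in Icc 1 t, ∫ ρ in Icc a 1, exp (-c * s * ρ ^ α) := by
  have hexp : -1 / α ≤ 0 := div_nonpos_of_nonpos_of_nonneg (by norm_num) hα.le
  rw [← integral_const_mul]
  refine setIntegral_mono_on ?_
    (((antitone_setIntegral_exp_neg_mul_rpow hα.le hc ha 1).antitoneOn _).integrableOn_isCompact
      isCompact_Icc) measurableSet_Icc fun s hs => ?_
  · exact (continuousOn_const.mul (continuousOn_id.rpow_const fun s hs =>
      Or.inl (zero_lt_one.trans_le hs.1).ne')).integrableOn_Icc
  · have hs0 : 0 < s := zero_lt_one.trans_le hs.1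
    have hts : t ^ (-1 / α) ≤ s ^ (-1 / α) := rpow_le_rpow_of_nonpos hs0 hs.2 hexp
    exact exp_neg_mul_rpow_le_setIntegral hα hc hs0 ha (by linarith)
      (rpow_le_one_of_one_le_of_nonpos hs.1 hexp)

end ExpNegMulRpow

theorem rpow_one_sub_div_two_le_setIntegral_rpow_neg {β t : ℝ} (hβ : 0 ≤ β) (ht : 2 ≤ t) :
    t ^ (1 - β) / 2 ≤ ∫ s in Icc 1 t, s ^ (-β) := by
  have ht0 : 0 < t := by linarith
  have hsub : Icc (t / 2) t ⊆ Icc 1 t := Icc_subset_Icc_left (by linarith)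
  have hint : IntegrableOn (fun s : ℝ => s ^ (-β)) (Icc 1 t) :=
    (continuousOn_id.rpow_const fun s hs =>
      Or.inl (zero_lt_one.trans_le hs.1).ne').integrableOn_Icc
  calc t ^ (1 - β) / 2 = t ^ (-β) * volume.real (Icc (t / 2) t) := by
        rw [volume_real_Icc_of_le (by linarith), sub_eq_add_neg, rpow_add ht0, rpow_one]
        ring
    _ ≤ ∫ s in Icc (t / 2) t, s ^ (-β) :=
        setIntegral_ge_of_const_le_real measurableSet_Icc measure_Icc_lt_top.ne
          (fun s hs => rpow_le_rpow_of_nonpos (by linarith [hs.1]) hs.2 (neg_nonpos.2 hβ))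
          (hint.mono_set hsub)
    _ ≤ ∫ s in Icc 1 t, s ^ (-β) := by
        refine setIntegral_mono_set hint ?_ hsub.eventuallyLE
        filter_upwards [ae_restrict_mem measurableSet_Icc] with s hs
        exact rpow_nonneg (zero_le_one.trans hs.1) _

theorem setIntegral_Icc_one_inv {t : ℝ} (ht : 1 ≤ t) : ∫ s in Icc 1 t, s⁻¹ = log t := by
  rw [integral_Icc_eq_integral_Ioc, ← intervalIntegral.integral_of_le ht,
    integral_inv_of_pos one_pos (by linarith), div_one]

theorem double_integral_lower_bound_general (α : ℝ) (hα₁ : 1 ≤ α)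
    (c : ℝ) (hc : 0 < c) :
    ∃ C > 0, ∀ t : ℝ, 2 ≤ t → ∀ ε : ℝ, 0 < ε → ε ≤ 1 / 4 →
      ∀ ξ : EuclideanSpace ℝ (Fin 2), 0 < ‖ξ‖ → ‖ξ‖ ≤ ε * t ^ (-1 / α) →
        (1 < α →
          C * t ^ (1 - 1 / α) ≤
            ∫ s in Set.Icc 1 t, ∫ ρ in Set.Icc (2 * ‖ξ‖) 1,
              Real.exp (-c * s * ρ ^ α)) ∧
        (α = 1 →
          C * Real.log t ≤
            ∫ s in Set.Icc 1 t, ∫ ρ in Set.Icc (2 * ‖ξ‖) 1,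
              Real.exp (-c * s * ρ ^ α)) := by
  refine ⟨exp (-c) / 4, by positivity, fun t ht ε _ hε ξ _ hξt => ?_⟩
  have hα : 0 < α := by linarith
  have htα : 0 < t ^ (-1 / α) := rpow_pos_of_pos (by linarith) _
  have hbound := setIntegral_rpow_neg_one_div_le_setIntegral_exp_neg_mul_rpow (c := c) hα hc.le
    (by positivity : 0 ≤ 2 * ‖ξ‖) (by nlinarith : 2 * ‖ξ‖ ≤ t ^ (-1 / α) / 2)
  refine ⟨fun _ => ?_, fun hα1 => ?_⟩
  · have hint := rpow_one_sub_div_two_le_setIntegral_rpow_neg (by positivity : 0 ≤ 1 / α) ht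
    rw [← neg_div] at hint
    calc exp (-c) / 4 * t ^ (1 - 1 / α) = exp (-c) / 2 * (t ^ (1 - 1 / α) / 2) := by ring
      _ ≤ _ := by gcongr
      _ ≤ _ := hbound
  · subst hα1
    have hlog : 0 ≤ log t := log_nonneg (by linarith)
    calc exp (-c) / 4 * log t ≤ exp (-c) / 2 * log t := by gcongr; linarith
      _ = exp (-c) / 2 * ∫ s in Icc 1 t, s ^ (-1 / (1 : ℝ)) := by
        simp only [div_one, rpow_neg_one, setIntegral_Icc_one_inv (by linarith : (1 : ℝ) ≤ t)]
      _ ≤ _ := hbound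

/-- lower bound for the double integral `∫_1^t ∫_{2|ξ|}^1 e^{-csρ^α} dρ ds`
when `|ξ| ≤ ε t^{-1/α}`: it is `≥ C t^{1-1/α}` for `α ∈ (1,2]` and `≥ C ln t` for `α = 1`. -/
theorem double_integral_lower_bound (α : ℝ) (hα₁ : 1 ≤ α) (hα₂ : α ≤ 2)
    (c : ℝ) (hc : 0 < c) :
    ∃ C > 0, ∀ t : ℝ, 2 ≤ t → ∀ ε : ℝ, 0 < ε → ε ≤ 1 / 4 →
      ∀ ξ : EuclideanSpace ℝ (Fin 2), 0 < ‖ξ‖ → ‖ξ‖ ≤ ε * t ^ (-1 / α) →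
        (1 < α →
          C * t ^ (1 - 1 / α) ≤
            ∫ s in Set.Icc 1 t, ∫ ρ in Set.Icc (2 * ‖ξ‖) 1,
              Real.exp (-c * s * ρ ^ α)) ∧
        (α = 1 →
          C * Real.log t ≤
            ∫ s in Set.Icc 1 t, ∫ ρ in Set.Icc (2 * ‖ξ‖) 1,
              Real.exp (-c * s * ρ ^ α)) :=
  double_integral_lower_bound_general α hα₁ c hc
end
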